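/- Let B^[r] be an r-th maximal bi-subalgebra and B^[2p−r] a (2p−r)-th maximal bi-subalgebra of su(2^p) with ω(b,c) = 0 for all b ∈ B^[r] and c ∈ B^[2p−r] (0 ≤ r ≤ 2p). Then every commutator subspace W(B), B ∈ 𝒢(B^[r]), of the commutator partition generated by B^[r] is a coset of B^[2p−r] in V. -/

import Mathlib

open scoped BigOperators

namespace QAP

/-- The index group `V = Z₂^p × Z₂^p` whose elements `(ζ,α)` label the
spinor generators `S^ζ_α` of `su(2^p)`. -/
abbrev V (p : ℕ) : Type := (Fin p → ZMod 2) × (Fin p → ZMod 2)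

/-- The symplectic pairing `ω((ζ,α),(η,β)) = ζ·β + η·α` over `ZMod 2`. -/
def omega {p : ℕ} (v w : V p) : ZMod 2 :=
  (∑ k, v.1 k * w.2 k) + (∑ k, w.1 k * v.2 k)

/-- `B` is an `r`-th maximal bi-subalgebra of `su(2^p)`: it is obtained from
`V` by a descending chain of `r` successive index-2 subgroups. -/
def IsRthMax {p : ℕ} (r : ℕ) (B : AddSubgroup (V p)) : Prop :=
  ∃ c : ℕ → AddSubgroup (V p), c 0 = ⊤ ∧ c r = B ∧
    ∀ i < r, c (i + 1) ≤ c i ∧ (c (i + 1)).relIndex (c i) = 2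

/-- `𝒢(G)`: the family consisting of `G` together with all its index-2 subgroups. -/
def GFam {p : ℕ} (G : AddSubgroup (V p)) : Set (AddSubgroup (V p)) :=
  {H | H = G ∨ (H ≤ G ∧ H.relIndex G = 2)}

/-- The commutator subspace `W(B)` determined by `B` relative to `B^[r]`:
elements of `V` commuting with exactly the members of `B` inside `B^[r]`. -/
def Wspace {p : ℕ} (Br B : AddSubgroup (V p)) : Set (V p) :=
  {v | {b : V p | b ∈ Br ∧ omega v b = 0} = (B : Set (V p))}

/-- The `⊓` operation on subsets of a subgroup `G`:
`B₁ ⊓ B₂ = (B₁ ∩ B₂) ∪ ((G \ B₁) ∩ (G \ B₂))`. -/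
def sqcap {p : ℕ} (G : AddSubgroup (V p)) (B₁ B₂ : Set (V p)) : Set (V p) :=
  (B₁ ∩ B₂) ∪ (((G : Set (V p)) \ B₁) ∩ (((G : Set (V p))) \ B₂))

/-! ### Auxiliary material -/

section Aux

variable {p : ℕ}

lemma omega_comm (v w : V p) : omega v w = omega w v := by
  unfold omega; ring

lemma omega_add_left (v v' w : V p) : omega (v + v') w = omega v w + omega v' w := by
  simp only [omega, Prod.fst_add, Prod.snd_add, Pi.add_apply, add_mul, mul_add,
    Finset.sum_add_distrib]
  ring

lemma omega_smul_left (c : ZMod 2) (v w : V p) : omega (c • v) w = c * omega v w := by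
  simp only [omega, Prod.smul_fst, Prod.smul_snd, Pi.smul_apply, smul_eq_mul, mul_add,
    Finset.mul_sum]
  congr 1 <;> (apply Finset.sum_congr rfl; intros; ring)

lemma omega_add_right (v w w' : V p) : omega v (w + w') = omega v w + omega v w' := by
  rw [omega_comm, omega_add_left, omega_comm w v, omega_comm w' v]

lemma omega_smul_right (c : ZMod 2) (v w : V p) : omega v (c • w) = c * omega v w := by
  rw [omega_comm, omega_smul_left, omega_comm]

lemma omega_zero_left (w : V p) : omega 0 w = 0 := by
  simp [omega]

/-- `ω` as a linear map into the dual. -/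
noncomputable def Phi : V p →ₗ[ZMod 2] Module.Dual (ZMod 2) (V p) :=
  LinearMap.mk₂ (ZMod 2) omega omega_add_left omega_smul_left omega_add_right omega_smul_right

@[simp] lemma Phi_apply (v w : V p) : Phi v w = omega v w := rfl

/-- Explicit inverse of `Phi`. -/
noncomputable def Psi : Module.Dual (ZMod 2) (V p) →ₗ[ZMod 2] V p where
  toFun f := (fun k => f (0, Pi.single k 1), fun k => f (Pi.single k 1, 0))
  map_add' f g := by
    refine Prod.ext ?_ ?_ <;> funext k <;> simp
  map_smul' c f := by
    refine Prod.ext ?_ ?_ <;> funext k <;> simp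

lemma decomp (w : V p) :
    w = (∑ k, (w.1 k) • (((Pi.single k 1 : Fin p → ZMod 2), (0 : Fin p → ZMod 2)) : V p))
      + (∑ k, (w.2 k) • (((0 : Fin p → ZMod 2), (Pi.single k 1 : Fin p → ZMod 2)) : V p)) := by
  refine Prod.ext ?_ ?_ <;> funext j <;>
    simp [Prod.fst_sum, Prod.snd_sum, Finset.sum_apply, Pi.single_apply, mul_ite,
      Finset.sum_ite_eq', Finset.sum_ite_eq]

lemma omega_Psi (f : Module.Dual (ZMod 2) (V p)) (w : V p) : omega (Psi f) w = f w := by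
  conv_rhs => rw [decomp w]
  rw [map_add, map_sum, map_sum]
  simp only [map_smul, smul_eq_mul]
  show (∑ k, f (0, Pi.single k 1) * w.2 k) + (∑ k, w.1 k * f (Pi.single k 1, 0)) = _
  rw [add_comm]
  congr 1 <;> (apply Finset.sum_congr rfl; intros; ring)

lemma Psi_Phi (v : V p) : Psi (Phi v) = v := by
  refine Prod.ext ?_ ?_ <;> funext k <;>
    simp [Psi, omega, Pi.single_apply, mul_ite, Finset.sum_ite_eq', Finset.sum_ite_eq]

/-- `ω` induces a linear equivalence `V ≃ Dual V`. -/
noncomputable def PhiEquiv : V p ≃ₗ[ZMod 2] Module.Dual (ZMod 2) (V p) :=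
  LinearEquiv.ofLinear Phi Psi
    (LinearMap.ext fun f => LinearMap.ext fun w => by
      simpa using omega_Psi f w)
    (LinearMap.ext fun v => by simpa using Psi_Phi v)

lemma card_V : Nat.card (V p) = 2 ^ (2 * p) := by
  simp [Nat.card_eq_fintype_card, two_mul, pow_add]

lemma card_of_isRthMax {r : ℕ} (hr : r ≤ 2 * p) {B : AddSubgroup (V p)}
    (h : IsRthMax r B) : Nat.card B = 2 ^ (2 * p - r) := by
  obtain ⟨c, hc0, hcr, hstep⟩ := h
  have hidx : ∀ i ≤ r, (c i).index = 2 ^ i := by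
    intro i hi
    induction i with
    | zero => simp [hc0]
    | succ n ih =>
      have hn := ih (le_of_lt (Nat.lt_of_succ_le hi))
      obtain ⟨hle, hrel⟩ := hstep n (Nat.lt_of_succ_le hi)
      have := AddSubgroup.relIndex_mul_index hle
      rw [hrel, hn] at this
      rw [← this]; ring
  have hBidx : B.index = 2 ^ r := by rw [← hcr]; exact hidx r le_rfl
  have hcard := AddSubgroup.card_mul_index B
  rw [hBidx, card_V] at hcard
  have h2 : (2:ℕ) ^ (2 * p) = 2 ^ (2 * p - r) * 2 ^ r := by
    rw [← pow_add, Nat.sub_add_cancel hr]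
  rw [h2] at hcard
  exact Nat.eq_of_mul_eq_mul_right (Nat.pow_pos (n := r) (by norm_num)) hcard

lemma finrank_of_card {W : Submodule (ZMod 2) (V p)} {m : ℕ}
    (h : Nat.card W = 2 ^ m) : Module.finrank (ZMod 2) W = m := by
  have : Fintype W := Fintype.ofFinite _
  have hc : Fintype.card W = 2 ^ Module.finrank (ZMod 2) W := by
    have := Module.card_eq_pow_finrank (K := ZMod 2) (V := W)
    simpa [ZMod.card] using this
  rw [Nat.card_eq_fintype_card, hc] at h
  exact Nat.pow_right_injective (le_refl 2) h

lemma finrank_V : Module.finrank (ZMod 2) (V p) = 2 * p := by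
  simp [Module.finrank_prod, two_mul]

/-- The perp of `Br` under `ω`. -/
def perp (Br : AddSubgroup (V p)) : Submodule (ZMod 2) (V p) where
  carrier := {v | ∀ b ∈ Br, omega v b = 0}
  add_mem' := by
    intro a b ha hb c hc
    rw [omega_add_left, ha c hc, hb c hc, add_zero]
  zero_mem' := fun b _ => omega_zero_left b
  smul_mem' := by
    intro c v hv b hb
    rw [omega_smul_left, hv b hb, mul_zero]

@[simp] lemma mem_perp {Br : AddSubgroup (V p)} {v : V p} :
    v ∈ perp Br ↔ ∀ b ∈ Br, omega v b = 0 := Iff.rfl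

/-- The image of the perp under `PhiEquiv` is the dual annihilator. -/
lemma map_perp (Br : AddSubgroup (V p)) :
    (perp Br).map ((PhiEquiv (p := p) : V p ≃ₗ[ZMod 2] Module.Dual (ZMod 2) (V p))
        : V p →ₗ[ZMod 2] Module.Dual (ZMod 2) (V p))
      = (AddSubgroup.toZModSubmodule 2 Br).dualAnnihilator := by
  ext f
  simp only [Submodule.mem_map, Submodule.mem_dualAnnihilator, mem_perp,
    AddSubgroup.mem_toZModSubmodule]
  constructor
  · rintro ⟨v, hv, rfl⟩ w hw
    exact hv w hw
  · intro hf
    refine ⟨Psi f, fun b hb => ?_, ?_⟩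
    · rw [omega_Psi]; exact hf b hb
    · exact LinearMap.ext fun w => by simpa [PhiEquiv] using omega_Psi f w

lemma finrank_perp (Br : AddSubgroup (V p)) :
    Module.finrank (ZMod 2) (perp Br)
      = 2 * p - Module.finrank (ZMod 2) (AddSubgroup.toZModSubmodule 2 Br) := by
  classical
  have h1 : Module.finrank (ZMod 2) (perp Br)
      = Module.finrank (ZMod 2)
          ((AddSubgroup.toZModSubmodule 2 Br).dualAnnihilator : Submodule (ZMod 2) _) := by
    rw [← map_perp Br]
    exact (LinearEquiv.finrank_map_eq PhiEquiv (perp Br)).symm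
  have h2 := Subspace.quotEquivAnnihilator (AddSubgroup.toZModSubmodule 2 Br)
  have h3 := Submodule.finrank_quotient_add_finrank (AddSubgroup.toZModSubmodule 2 Br)
  rw [h1, ← h2.finrank_eq]
  rw [finrank_V] at h3
  omega

lemma perp_eq_B2 {r : ℕ} (hr : r ≤ 2 * p) (Br B2 : AddSubgroup (V p))
    (hBr : IsRthMax r Br) (hB2 : IsRthMax (2 * p - r) B2)
    (hcomm : ∀ b ∈ Br, ∀ c ∈ B2, omega b c = 0) :
    (AddSubgroup.toZModSubmodule 2 B2 : Submodule (ZMod 2) (V p)) = perp Br := by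
  have hle : (AddSubgroup.toZModSubmodule 2 B2 : Submodule (ZMod 2) (V p)) ≤ perp Br := by
    intro v hv b hb
    rw [omega_comm]
    exact hcomm b hb v (by simpa using hv)
  refine Submodule.eq_of_le_of_finrank_le hle ?_
  have hfBr : Module.finrank (ZMod 2) (AddSubgroup.toZModSubmodule 2 Br) = 2 * p - r := by
    refine finrank_of_card ?_
    have := card_of_isRthMax hr hBr
    simpa using this
  have hfB2 : Module.finrank (ZMod 2) (AddSubgroup.toZModSubmodule 2 B2) = r := by
    refine finrank_of_card ?_
    have := card_of_isRthMax (Nat.sub_le _ _) hB2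
    rw [Nat.sub_sub_self hr] at this
    simpa using this
  rw [finrank_perp Br, hfBr, hfB2]
  omega

/-- Existence of a point of `Wspace Br B` for `B ∈ 𝒢(Br)`. -/
lemma exists_mem_Wspace (Br B : AddSubgroup (V p)) (hB : B ∈ GFam Br) :
    ∃ v0 : V p, {b : V p | b ∈ Br ∧ omega v0 b = 0} = (B : Set (V p)) := by
  classical
  have h1 : ∀ x : ZMod 2, x ≠ 0 → x = 1 := by decide
  rcases hB with rfl | ⟨hle, hrel⟩
  · exact ⟨0, by ext b; simp [omega_zero_left]⟩
  · -- index two case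
    have hne : B ≠ Br := by
      rintro rfl
      rw [AddSubgroup.relIndex_self] at hrel
      norm_num at hrel
    obtain ⟨b0, hb0Br, hb0B⟩ : ∃ b0, b0 ∈ Br ∧ b0 ∉ B := by
      by_contra hcon
      push_neg at hcon
      exact hne (le_antisymm hle hcon)
    set B' : Submodule (ZMod 2) (V p) := AddSubgroup.toZModSubmodule 2 B with hB'
    have hb0B' : B'.mkQ b0 ≠ 0 := by
      simp only [Submodule.mkQ_apply, ne_eq, Submodule.Quotient.mk_eq_zero]
      simpa [hB'] using hb0B
    obtain ⟨g, hg⟩ : ∃ g : Module.Dual (ZMod 2) (V p ⧸ B'), g (B'.mkQ b0) ≠ 0 := by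
      by_contra hcon
      push_neg at hcon
      exact hb0B' ((Module.forall_dual_apply_eq_zero_iff (ZMod 2) (B'.mkQ b0)).mp hcon)
    set f : Module.Dual (ZMod 2) (V p) := g.comp B'.mkQ with hf
    have hfB : ∀ b ∈ B, f b = 0 := by
      intro b hb
      simp only [hf, LinearMap.comp_apply, Submodule.mkQ_apply]
      rw [(Submodule.Quotient.mk_eq_zero B').mpr (by simpa [hB'] using hb), map_zero]
    have hfb0 : f b0 = 1 := h1 _ hg
    have hQcard : Nat.card (Br ⧸ B.addSubgroupOf Br) = 2 := hrel
    refine ⟨Psi f, ?_⟩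
    ext b
    simp only [Set.mem_setOf_eq, SetLike.mem_coe, omega_Psi]
    constructor
    · rintro ⟨hbBr, hfb⟩
      by_contra hbB
      -- images of b and b0 in the order-2 quotient agree
      obtain ⟨y, -, hy⟩ := (Nat.card_eq_two_iff' (0 : Br ⧸ B.addSubgroupOf Br)).mp hQcard
      have hxb : (QuotientAddGroup.mk (⟨b, hbBr⟩ : Br) : Br ⧸ B.addSubgroupOf Br) ≠ 0 := by
        rw [ne_eq, QuotientAddGroup.eq_zero_iff]
        simpa [AddSubgroup.mem_addSubgroupOf] using hbB
      have hxb0 : (QuotientAddGroup.mk (⟨b0, hb0Br⟩ : Br) : Br ⧸ B.addSubgroupOf Br) ≠ 0 := by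
        rw [ne_eq, QuotientAddGroup.eq_zero_iff]
        simpa [AddSubgroup.mem_addSubgroupOf] using hb0B
      have heq : (QuotientAddGroup.mk (⟨b, hbBr⟩ : Br) : Br ⧸ B.addSubgroupOf Br)
          = QuotientAddGroup.mk (⟨b0, hb0Br⟩ : Br) := by
        rw [hy _ hxb, hy _ hxb0]
      rw [QuotientAddGroup.eq] at heq
      have hmem : b0 - b ∈ B := by
        have h' : ((-(⟨b, hbBr⟩ : Br) + ⟨b0, hb0Br⟩ : Br) : V p) ∈ B := by
          simpa [AddSubgroup.mem_addSubgroupOf] using heq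
        have h'' : (-b + b0) ∈ B := by simpa using h'
        simpa [sub_eq_add_neg, add_comm] using h''
      have : f (b0 - b) = 0 := hfB _ hmem
      rw [map_sub, hfb0, hfb, sub_zero] at this
      exact one_ne_zero this
    · intro hbB
      exact ⟨hle hbB, hfB b hbB⟩

lemma add_self (x : V p) : x + x = 0 := by
  have h : ∀ a : ZMod 2, a + a = 0 := by decide
  refine Prod.ext ?_ ?_ <;> funext k <;> simpa using h _

end Aux

/-- if `B^[r]` and `B^[2p−r]` commute, then every commutator
subspace `W(B)`, `B ∈ 𝒢(B^[r])`, is a coset of `B^[2p−r]` in `V`. -/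
theorem commutator_subspace_is_coset {p r : ℕ} (hp : 1 ≤ p) (hr : r ≤ 2 * p)
    (Br B2 : AddSubgroup (V p))
    (hBr : IsRthMax r Br) (hB2 : IsRthMax (2 * p - r) B2)
    (hcomm : ∀ b ∈ Br, ∀ c ∈ B2, omega b c = 0) :
    ∀ B ∈ GFam Br, ∃ v : V p, Wspace Br B = (v + ·) '' (B2 : Set (V p)) := by
  intro B hB
  have h1 : ∀ x : ZMod 2, x ≠ 0 → x = 1 := by decide
  obtain ⟨v0, hv0⟩ := exists_mem_Wspace Br B hB
  have hperp : ∀ u : V p, u ∈ B2 ↔ ∀ b ∈ Br, omega u b = 0 := by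
    intro u
    rw [← mem_perp, ← perp_eq_B2 hr Br B2 hBr hB2 hcomm]
    simp
  refine ⟨v0, ?_⟩
  ext v
  constructor
  · intro hv
    have hv' : {b : V p | b ∈ Br ∧ omega v b = 0} = (B : Set (V p)) := hv
    refine ⟨v0 + v, ?_, ?_⟩
    · -- v0 + v ∈ B2
      rw [SetLike.mem_coe, hperp]
      intro b hb
      rw [omega_add_left]
      by_cases hbB : b ∈ B
      · have h1' : omega v b = 0 := by
          have hm : b ∈ {b : V p | b ∈ Br ∧ omega v b = 0} := by rw [hv']; exact hbB
          exact hm.2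
        have h2' : omega v0 b = 0 := by
          have hm : b ∈ {b : V p | b ∈ Br ∧ omega v0 b = 0} := by rw [hv0]; exact hbB
          exact hm.2
        rw [h1', h2', add_zero]
      · have h1' : omega v b ≠ 0 := by
          intro h0
          exact hbB (by rw [← SetLike.mem_coe, ← hv']; exact ⟨hb, h0⟩)
        have h2' : omega v0 b ≠ 0 := by
          intro h0
          exact hbB (by rw [← SetLike.mem_coe, ← hv0]; exact ⟨hb, h0⟩)
        rw [h1 _ h1', h1 _ h2']
        decide
    · -- v0 + (v0 + v) = v
      show v0 + (v0 + v) = v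
      rw [← add_assoc, add_self, zero_add]
  · rintro ⟨u, hu, rfl⟩
    show {b : V p | b ∈ Br ∧ omega (v0 + u) b = 0} = (B : Set (V p))
    rw [← hv0]
    ext b
    simp only [Set.mem_setOf_eq]
    have : ∀ hb : b ∈ Br, omega (v0 + u) b = omega v0 b := by
      intro hb
      rw [omega_add_left, (hperp u).mp hu b hb, add_zero]
    constructor
    · rintro ⟨hb, h0⟩; exact ⟨hb, by rw [← this hb]; exact h0⟩
    · rintro ⟨hb, h0⟩; exact ⟨hb, by rw [this hb]; exact h0⟩

end QAP
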